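/- arXiv:2010.07248 — 2 statements merged into one kernel-verified Lean document; each statement's English description precedes it below -/
import Mathlib

section
/- Limit of the area ratio at a regular point: Let V be a complex Hilbert space and let v be a holomorphic map from an open neighborhood of a point z₀ ∈ ℂ to V, with v'(z₀) ≠ 0, and set p := v(z₀). Then there exists δ₀ > 0 such that for every δ ∈ (0, δ₀], as r → 0⁺, r⁻² ∫_{{z ∈ B(z₀,δ) : ‖v(z) − p‖ < r}} ‖v'(z)‖² dA(z) tends to π. -/
/-!
By the mean value inequality, on a small disc `B(z₀, ρ)` on which `‖v' - v'(z₀)‖ ≤ κ ‖v'(z₀)‖`,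
both `‖v z - v z₀‖ / |z - z₀|` and `‖v' z‖` lie between `(1 - κ) ‖v'(z₀)‖` and
`(1 + κ) ‖v'(z₀)‖`. Hence the region `{‖v - v z₀‖ < r}` contains the disc of radius
`r / ((1 + κ) ‖v'(z₀)‖)` and is contained in the one of radius `r / ((1 - κ) ‖v'(z₀)‖)`, and the
area ratio is squeezed between `π ((1 - κ) / (1 + κ))²` and `π ((1 + κ) / (1 - κ))²` for small
`r`. Taking `δ₀` with `κ = 1/2` keeps the whole region `{z ∈ B(z₀, δ) : ‖v z - v z₀‖ < r}`
inside a disc of radius `2r / ‖v'(z₀)‖`, so it shrinks to `z₀`; then let `κ → 0`.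
-/

open MeasureTheory Metric Set Filter Topology Real

theorem tendsto_of_forall_eventually_mem_Icc {ι α β : Type*} [LinearOrder β] [TopologicalSpace β]
    [OrderTopology β] {k : Filter ι} [k.NeBot] {l : Filter α} {F : α → β} {lo hi : ι → β} {L : β}
    (hlo : Tendsto lo k (𝓝 L)) (hhi : Tendsto hi k (𝓝 L))
    (h : ∀ᶠ i in k, ∀ᶠ x in l, F x ∈ Icc (lo i) (hi i)) :
    Tendsto F l (𝓝 L) := by
  refine tendsto_order.2 ⟨fun m hm => ?_, fun M hM => ?_⟩
  · obtain ⟨i, hmi, hi⟩ := ((hlo.eventually (lt_mem_nhds hm)).and h).exists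
    exact hi.mono fun x hx => hmi.trans_le hx.1
  · obtain ⟨i, hiM, hi⟩ := ((hhi.eventually (gt_mem_nhds hM)).and h).exists
    exact hi.mono fun x hx => hx.2.trans_lt hiM

theorem norm_mem_Icc_of_norm_sub_le {E : Type*} [SeminormedAddCommGroup E] {x y : E} {κ : ℝ}
    (h : ‖x - y‖ ≤ κ * ‖y‖) : ‖x‖ ∈ Icc ((1 - κ) * ‖y‖) ((1 + κ) * ‖y‖) :=
  ⟨by linarith [norm_sub_norm_le y x, norm_sub_rev x y], by linarith [norm_sub_norm_le x y]⟩

section MeanValue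

variable {𝕜 E : Type*} [RCLike 𝕜] [NormedAddCommGroup E] [NormedSpace 𝕜 E] {f : 𝕜 → E}
  {s : Set 𝕜} {c : E} {x y : 𝕜}

theorem Convex.norm_image_sub_sub_smul_le_of_norm_deriv_sub_le {C : ℝ}
    (hf : ∀ x ∈ s, DifferentiableAt 𝕜 f x) (bound : ∀ x ∈ s, ‖deriv f x - c‖ ≤ C)
    (hs : Convex ℝ s) (xs : x ∈ s) (ys : y ∈ s) :
    ‖f y - f x - (y - x) • c‖ ≤ C * ‖y - x‖ := by
  refine hs.norm_image_sub_le_of_norm_fderiv_le' (φ := .toSpanSingleton 𝕜 c) hf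
    (fun z hz => ?_) xs ys
  rw [(hf z hz).hasDerivAt.hasFDerivAt.fderiv]
  simpa only [← ContinuousLinearMap.toSpanSingletonLIE_apply, ← map_sub,
    LinearIsometryEquiv.norm_map] using bound z hz

theorem Convex.norm_image_sub_mem_Icc_of_norm_deriv_sub_le {κ : ℝ}
    (hf : ∀ x ∈ s, DifferentiableAt 𝕜 f x) (bound : ∀ x ∈ s, ‖deriv f x - c‖ ≤ κ * ‖c‖)
    (hs : Convex ℝ s) (xs : x ∈ s) (ys : y ∈ s) :
    ‖f y - f x‖ ∈ Icc ((1 - κ) * ‖c‖ * ‖y - x‖) ((1 + κ) * ‖c‖ * ‖y - x‖) := by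
  have h : ‖f y - f x - (y - x) • c‖ ≤ κ * ‖(y - x) • c‖ := by
    rw [norm_smul, mul_comm ‖y - x‖, ← mul_assoc]
    exact hs.norm_image_sub_sub_smul_le_of_norm_deriv_sub_le hf bound xs ys
  simpa only [norm_smul, mul_comm ‖y - x‖, mul_assoc] using norm_mem_Icc_of_norm_sub_le h

end MeanValue

theorem Complex.measureReal_ball (z : ℂ) {r : ℝ} (hr : 0 ≤ r) :
    volume.real (ball z r) = π * r ^ 2 := by
  simp [measureReal_def, ENNReal.toReal_ofReal hr, mul_comm]

theorem le_setIntegral_of_ball_subset {f : ℂ → ℝ} {S : Set ℂ} {z₀ : ℂ} {r m : ℝ} (hf : 0 ≤ f)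
    (hr : 0 ≤ r) (hsub : ball z₀ r ⊆ S) (hint : IntegrableOn f S)
    (hm : ∀ z ∈ ball z₀ r, m ≤ f z) :
    m * (π * r ^ 2) ≤ ∫ z in S, f z := by
  rw [← Complex.measureReal_ball z₀ hr]
  calc m * volume.real (ball z₀ r) ≤ ∫ z in ball z₀ r, f z :=
        setIntegral_ge_of_const_le_real measurableSet_ball measure_ball_lt_top.ne hm
          (hint.mono_set hsub)
    _ ≤ ∫ z in S, f z := setIntegral_mono_set hint (ae_of_all _ hf) hsub.eventuallyLE

theorem setIntegral_le_of_subset_ball {f : ℂ → ℝ} {S : Set ℂ} {z₀ : ℂ} {R M : ℝ} (hf : 0 ≤ f)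
    (hR : 0 ≤ R) (hsub : S ⊆ ball z₀ R) (hint : IntegrableOn f (ball z₀ R))
    (hM : ∀ z ∈ ball z₀ R, f z ≤ M) :
    ∫ z in S, f z ≤ M * (π * R ^ 2) := by
  rw [← Complex.measureReal_ball z₀ hR, mul_comm, ← smul_eq_mul, ← setIntegral_const]
  calc ∫ z in S, f z ≤ ∫ z in ball z₀ R, f z :=
        setIntegral_mono_set hint (ae_of_all _ hf) hsub.eventuallyLE
    _ ≤ ∫ _ in ball z₀ R, M :=
        setIntegral_mono_on hint (integrableOn_const measure_ball_lt_top.ne) measurableSet_ball hM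

theorem inv_sq_mul_setIntegral_mem_Icc {f : ℂ → ℝ} {S : Set ℂ} {z₀ : ℂ} {a b r : ℝ}
    (ha : 0 < a) (hb : 0 < b) (hr : 0 < r) (hf : 0 ≤ f)
    (hinner : ball z₀ (r / b) ⊆ S) (houter : S ⊆ ball z₀ (r / a))
    (hint : IntegrableOn f (ball z₀ (r / a)))
    (hbounds : ∀ z ∈ ball z₀ (r / a), f z ∈ Icc (a ^ 2) (b ^ 2)) :
    (r ^ 2)⁻¹ * ∫ z in S, f z ∈ Icc (π * (a / b) ^ 2) (π * (b / a) ^ 2) := by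
  have hr2 : 0 < r ^ 2 := by positivity
  have hlow := le_setIntegral_of_ball_subset hf (by positivity) hinner (hint.mono_set houter)
    fun z hz => (hbounds z (hinner.trans houter hz)).1
  have hup := setIntegral_le_of_subset_ball hf (by positivity) houter hint
    fun z hz => (hbounds z hz).2
  constructor
  · rw [le_inv_mul_iff₀ hr2]
    exact le_of_eq_of_le (by ring) hlow
  · rw [inv_mul_le_iff₀ hr2]
    exact hup.trans_eq (by ring)

section Sublevel

variable {E F : Type*} [SeminormedAddCommGroup E] [SeminormedAddCommGroup F] {v : E → F} {z₀ : E}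
  {r : ℝ}

theorem ball_subset_setOf_mem_ball_and_norm_sub_lt {b δ : ℝ} (hb : 0 < b) (hδ : r / b ≤ δ)
    (hup : ∀ z ∈ ball z₀ (r / b), ‖v z - v z₀‖ ≤ b * ‖z - z₀‖) :
    ball z₀ (r / b) ⊆ {z | z ∈ ball z₀ δ ∧ ‖v z - v z₀‖ < r} := fun z hz =>
  ⟨ball_subset_ball hδ hz,
    (hup z hz).trans_lt <| by rwa [mem_ball, dist_eq_norm, lt_div_iff₀' hb] at hz⟩

theorem setOf_mem_and_norm_sub_lt_subset_ball {s : Set E} {a : ℝ} (ha : 0 < a)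
    (hlow : ∀ z ∈ s, a * ‖z - z₀‖ ≤ ‖v z - v z₀‖) :
    {z | z ∈ s ∧ ‖v z - v z₀‖ < r} ⊆ ball z₀ (r / a) := fun z ⟨hzs, hzr⟩ => by
  rw [mem_ball, dist_eq_norm, lt_div_iff₀' ha]
  exact (hlow z hzs).trans_lt hzr

end Sublevel

section Holomorphic

variable {V : Type*} [NormedAddCommGroup V] [NormedSpace ℂ V] {v : ℂ → V}
  {W : Set ℂ} {z₀ : ℂ}

theorem exists_closedBall_subset_forall_norm_deriv_sub_le [CompleteSpace V] (hW : IsOpen W)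
    (hv : DifferentiableOn ℂ v W) (hz₀ : z₀ ∈ W) {ε : ℝ} (hε : 0 < ε) :
    ∃ ρ > 0, closedBall z₀ ρ ⊆ W ∧ ∀ z ∈ closedBall z₀ ρ, ‖deriv v z - deriv v z₀‖ ≤ ε := by
  have hcont : ContinuousAt (deriv v) z₀ := (hv.analyticOnNhd hW z₀ hz₀).deriv.continuousAt
  obtain ⟨ρ, hρ, h⟩ := nhds_basis_closedBall.eventually_iff.1
    ((hW.eventually_mem hz₀).and (hcont.eventually (closedBall_mem_nhds _ hε)))
  exact ⟨ρ, hρ, fun z hz => (h hz).1, fun z hz => by simpa [dist_eq_norm] using (h hz).2⟩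

theorem norm_image_sub_mem_Icc_of_closedBall_subset (hW : IsOpen W) (hv : DifferentiableOn ℂ v W)
    {c : V} {κ ρ : ℝ} (hρW : closedBall z₀ ρ ⊆ W)
    (hderiv : ∀ z ∈ closedBall z₀ ρ, ‖deriv v z - c‖ ≤ κ * ‖c‖) {z : ℂ} (hz : z ∈ closedBall z₀ ρ) :
    ‖v z - v z₀‖ ∈ Icc ((1 - κ) * ‖c‖ * ‖z - z₀‖) ((1 + κ) * ‖c‖ * ‖z - z₀‖) :=
  (convex_closedBall z₀ ρ).norm_image_sub_mem_Icc_of_norm_deriv_sub_le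
    (fun _ hx => hv.differentiableAt (hW.mem_nhds (hρW hx))) hderiv
    (mem_closedBall_self (dist_nonneg.trans hz)) hz

theorem setOf_mem_ball_and_norm_sub_lt_subset_ball (hW : IsOpen W) (hv : DifferentiableOn ℂ v W)
    {c : V} (hc : c ≠ 0) {κ ρ δ : ℝ} (hκ : κ < 1) (hρW : closedBall z₀ ρ ⊆ W)
    (hderiv : ∀ z ∈ closedBall z₀ ρ, ‖deriv v z - c‖ ≤ κ * ‖c‖) (hδρ : δ ≤ ρ) (r : ℝ) :
    {z | z ∈ ball z₀ δ ∧ ‖v z - v z₀‖ < r} ⊆ ball z₀ (r / ((1 - κ) * ‖c‖)) :=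
  setOf_mem_and_norm_sub_lt_subset_ball (mul_pos (by linarith) (norm_pos_iff.2 hc)) fun z hz =>
    (norm_image_sub_mem_Icc_of_closedBall_subset hW hv hρW hderiv
      (ball_subset_closedBall (ball_subset_ball hδρ hz))).1

theorem eventually_inv_sq_mul_setIntegral_mem_Icc [CompleteSpace V] (hW : IsOpen W)
    (hv : DifferentiableOn ℂ v W) {c : V} (hc : c ≠ 0) {κ ρ δ a₀ : ℝ} (hκ₀ : 0 ≤ κ) (hκ₁ : κ < 1)
    (hρ : 0 < ρ) (hδ : 0 < δ) (hρW : closedBall z₀ ρ ⊆ W)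
    (hderiv : ∀ z ∈ closedBall z₀ ρ, ‖deriv v z - c‖ ≤ κ * ‖c‖)
    (ha₀ : 0 < a₀) (hloc : ∀ r, {z | z ∈ ball z₀ δ ∧ ‖v z - v z₀‖ < r} ⊆ ball z₀ (r / a₀)) :
    ∀ᶠ r in 𝓝[>] 0, (r ^ 2)⁻¹ * ∫ z in {z | z ∈ ball z₀ δ ∧ ‖v z - v z₀‖ < r}, ‖deriv v z‖ ^ 2 ∈
      Icc (π * ((1 - κ) / (1 + κ)) ^ 2) (π * ((1 + κ) / (1 - κ)) ^ 2) := by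
  set a := (1 - κ) * ‖c‖
  set b := (1 + κ) * ‖c‖
  have hc' : 0 < ‖c‖ := norm_pos_iff.2 hc
  have ha : 0 < a := mul_pos (by linarith) hc'
  have hb : 0 < b := mul_pos (by linarith) hc'
  have hv_mem : ∀ z ∈ closedBall z₀ ρ, ‖v z - v z₀‖ ∈ Icc (a * ‖z - z₀‖) (b * ‖z - z₀‖) :=
    fun z hz => norm_image_sub_mem_Icc_of_closedBall_subset hW hv hρW hderiv hz
  have hderiv_mem : ∀ z ∈ closedBall z₀ ρ, ‖deriv v z‖ ∈ Icc a b := fun z hz =>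
    norm_mem_Icc_of_norm_sub_le (hderiv z hz)
  filter_upwards [Ioo_mem_nhdsGT (mul_pos ha hρ), Ioo_mem_nhdsGT (mul_pos ha₀ hρ),
    Ioo_mem_nhdsGT (mul_pos hb hδ)] with r ⟨hr, hra⟩ ⟨_, hra₀⟩ ⟨_, hrb⟩
  have hball : ball z₀ (r / a) ⊆ closedBall z₀ ρ :=
    ball_subset_closedBall.trans
      (closedBall_subset_closedBall (div_le_of_le_mul₀ ha.le hρ.le (by linarith)))
  have hlocρ : {z | z ∈ ball z₀ δ ∧ ‖v z - v z₀‖ < r} ⊆ closedBall z₀ ρ :=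
    (hloc r).trans <| ball_subset_closedBall.trans
      (closedBall_subset_closedBall (div_le_of_le_mul₀ ha₀.le hρ.le (by linarith)))
  rw [← mul_div_mul_right (1 - κ) (1 + κ) hc'.ne', ← mul_div_mul_right (1 + κ) (1 - κ) hc'.ne']
  refine inv_sq_mul_setIntegral_mem_Icc (z₀ := z₀) ha hb hr (fun _ => sq_nonneg _) ?_ ?_ ?_ ?_
  · have hrab : r / b ≤ r / a := div_le_div_of_nonneg_left hr.le ha (by nlinarith)
    exact ball_subset_setOf_mem_ball_and_norm_sub_lt hb (by rw [div_le_iff₀ hb]; linarith)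
      fun z hz => (hv_mem z (hball (ball_subset_ball hrab hz))).2
  · exact fun z hz => setOf_mem_and_norm_sub_lt_subset_ball ha (fun z hz => (hv_mem z hz).1)
      ⟨hlocρ hz, hz.2⟩
  · exact (((hv.deriv hW).continuousOn.mono hρW).norm.pow 2).integrableOn_compact
      (isCompact_closedBall z₀ ρ) |>.mono_set hball
  · exact fun z hz => ⟨pow_le_pow_left₀ ha.le (hderiv_mem z (hball hz)).1 2,
      pow_le_pow_left₀ (norm_nonneg _) (hderiv_mem z (hball hz)).2 2⟩

end Holomorphic

/-- Limit of the area ratio at a regular point: if `v` is holomorphic near `z₀`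
with `v'(z₀) ≠ 0` and `p = v(z₀)`, then there is `δ₀ > 0` such that for every
`δ ∈ (0, δ₀]`, the ratio `r⁻² · ∫_{z ∈ B(z₀,δ), ‖v(z) − p‖ < r} ‖v'(z)‖² dA`
tends to `π` as `r → 0⁺`. -/
theorem area_ratio_tendsto_pi_at_regular_point
    {V : Type*} [NormedAddCommGroup V] [InnerProductSpace ℂ V] [CompleteSpace V]
    (W : Set ℂ) (hWopen : IsOpen W) (z₀ : ℂ) (hz₀ : z₀ ∈ W)
    (v : ℂ → V) (hv : DifferentiableOn ℂ v W)
    (hreg : deriv v z₀ ≠ 0) :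
    ∃ δ₀ > 0, ∀ δ, 0 < δ → δ ≤ δ₀ →
      Tendsto
        (fun r : ℝ => (r ^ 2)⁻¹ *
          ∫ z in {z | z ∈ ball z₀ δ ∧ ‖v z - v z₀‖ < r}, ‖deriv v z‖ ^ 2)
        (nhdsWithin 0 (Set.Ioi 0)) (nhds Real.pi) := by
  have hc : 0 < ‖deriv v z₀‖ := norm_pos_iff.2 hreg
  obtain ⟨δ₀, hδ₀, hδ₀W, hδ₀c⟩ :=
    exists_closedBall_subset_forall_norm_deriv_sub_le hWopen hv hz₀ (mul_pos one_half_pos hc)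
  refine ⟨δ₀, hδ₀, fun δ hδ hδδ₀ => ?_⟩
  have hloc := setOf_mem_ball_and_norm_sub_lt_subset_ball hWopen hv hreg one_half_lt_one hδ₀W
    hδ₀c hδδ₀
  refine tendsto_of_forall_eventually_mem_Icc (k := 𝓝[>] 0)
    (lo := fun κ => π * ((1 - κ) / (1 + κ)) ^ 2) (hi := fun κ => π * ((1 + κ) / (1 - κ)) ^ 2)
    ?_ ?_ ?_
  · have : ContinuousAt (fun κ : ℝ => π * ((1 - κ) / (1 + κ)) ^ 2) 0 := by
      fun_prop (disch := norm_num)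
    simpa using this.tendsto.mono_left nhdsWithin_le_nhds
  · have : ContinuousAt (fun κ : ℝ => π * ((1 + κ) / (1 - κ)) ^ 2) 0 := by
      fun_prop (disch := norm_num)
    simpa using this.tendsto.mono_left nhdsWithin_le_nhds
  · filter_upwards [Ioo_mem_nhdsGT one_pos] with κ ⟨hκ₀, hκ₁⟩
    obtain ⟨ρ, hρ, hρW, hρc⟩ :=
      exists_closedBall_subset_forall_norm_deriv_sub_le hWopen hv hz₀ (mul_pos hκ₀ hc)
    exact eventually_inv_sq_mul_setIntegral_mem_Icc hWopen hv hreg hκ₀.le hκ₁ hρ hδ hρW hρc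
      (by positivity) hloc
end

section
/- Weak harmonicity of Hilbert-space-valued holomorphic maps: Let V be a complex Hilbert space, U ⊆ ℂ an open set, v : U → V holomorphic, and w : ℂ → V a continuously ℝ-differentiable map whose support is compact and contained in U. Denote by ∂_s w(z) and ∂_t w(z) the real partial derivatives of w at z in the directions 1 and i respectively; for holomorphic v one has ∂_s v = v' and ∂_t v = i·v'. Then ∫_U ( Re⟪∂_s w(z), v'(z)⟫ + Re⟪∂_t w(z), i·v'(z)⟫ ) dA(z) = 0. -/
open MeasureTheory Set

/-!
Put `g = v'`, again holomorphic and hence `C¹` on `U`, and `f₁ = Re⟪w, g⟫`, `f₂ = Re⟪w, i g⟫`.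
Both are `C¹` with compact support inside `U`, so `∫ (∂ₛf₁ + ∂ₜf₂) = 0`. By the product rule
`∂ₛf₁ + ∂ₜf₂` is the integrand plus `Re⟪w, ∂ₛg + i ∂ₜg⟫`, and this last term vanishes by the
Cauchy–Riemann equation `∂ₜg = i ∂ₛg`.
-/

section IntegralFDeriv

variable {E G : Type*} [NormedAddCommGroup E] [NormedSpace ℝ E] [MeasurableSpace E]
  [NormedAddCommGroup G] [NormedSpace ℝ G] {μ : Measure E} {f : E → G}

theorem ContDiff.integrable_fderiv_apply [OpensMeasurableSpace E] [IsFiniteMeasureOnCompacts μ]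
    (hf : ContDiff ℝ 1 f) (hc : HasCompactSupport f) (v : E) :
    Integrable (fun x ↦ fderiv ℝ f x v) μ :=
  ((hf.continuous_fderiv one_ne_zero).clm_apply continuous_const).integrable_of_hasCompactSupport
    (hc.fderiv_apply ℝ v)

variable [FiniteDimensional ℝ E] [BorelSpace E] [μ.IsAddHaarMeasure]

theorem integral_fderiv_apply_eq_zero (hf : ContDiff ℝ 1 f) (hc : HasCompactSupport f) (v : E) :
    ∫ x, fderiv ℝ f x v ∂μ = 0 := by
  simpa using integral_smul_fderiv_eq_neg_fderiv_smul_of_integrable (μ := μ) (v := v)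
    (f := fun _ ↦ (1 : ℝ)) (g := f) (by simp) (by simpa using hf.integrable_fderiv_apply hc v)
    (by simpa using hf.continuous.integrable_of_hasCompactSupport hc)
    (fun x _ ↦ differentiableAt_const _) (fun x _ ↦ hf.differentiable one_ne_zero x)

theorem setIntegral_fderiv_apply_eq_zero {U : Set E} (hf : ContDiff ℝ 1 f)
    (hc : HasCompactSupport f) (hU : tsupport f ⊆ U) (v : E) :
    ∫ x in U, fderiv ℝ f x v ∂μ = 0 := by
  rw [setIntegral_eq_integral_of_forall_compl_eq_zero fun x hx ↦ by
    rw [fderiv_of_notMem_tsupport ℝ fun h ↦ hx (hU h), zero_apply]]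
  exact integral_fderiv_apply_eq_zero hf hc v

end IntegralFDeriv

section Inner

variable {𝕜 E F : Type*} [RCLike 𝕜] [NormedAddCommGroup F] [InnerProductSpace 𝕜 F]

theorem tsupport_inner_subset_left [TopologicalSpace E] {w h : E → F} :
    tsupport (fun z ↦ inner 𝕜 (w z) (h z)) ⊆ tsupport w :=
  closure_mono fun z hz hw ↦ hz (by simp [hw])

theorem contDiff_inner_of_tsupport_subset [NormedAddCommGroup E] [NormedSpace ℝ E]
    [NormedSpace ℝ F] {n : WithTop ℕ∞} {U : Set E} {w h : E → F} (hw : ContDiff ℝ n w)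
    (hwU : tsupport w ⊆ U) (hh : ∀ z ∈ U, ContDiffAt ℝ n h z) :
    ContDiff ℝ n fun z ↦ inner 𝕜 (w z) (h z) := by
  refine contDiff_iff_contDiffAt.2 fun z ↦ ?_
  by_cases hz : z ∈ tsupport w
  · exact hw.contDiffAt.inner 𝕜 (hh z (hwU hz))
  · refine contDiffAt_const (c := (0 : 𝕜)).congr_of_eventuallyEq ?_
    filter_upwards [notMem_tsupport_iff_eventuallyEq.1 hz] with y hy
    simp [hy]

end Inner

section Complex

open Complex

variable {E V : Type*} [NormedAddCommGroup E] [NormedSpace ℂ E]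
  [NormedAddCommGroup V] [InnerProductSpace ℂ V]

theorem DifferentiableAt.fderiv_real_apply_eq_smul_deriv {g : ℂ → E} {z : ℂ}
    (hg : DifferentiableAt ℂ g z) (y : ℂ) : fderiv ℝ g z y = y • deriv g z := by
  simp [hg.fderiv_restrictScalars ℝ, fderiv_eq_smul_deriv]

theorem fderiv_re_inner_apply {w h : ℂ → V} {z : ℂ} (hw : DifferentiableAt ℝ w z)
    (hh : DifferentiableAt ℝ h z) (y : ℂ) :
    fderiv ℝ (fun x ↦ (inner ℂ (w x) (h x)).re) z y
      = (inner ℂ (w z) (fderiv ℝ h z y)).re + (inner ℂ (fderiv ℝ w z y) (h z)).re := by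
  have hre : HasFDerivAt (fun x ↦ (inner ℂ (w x) (h x)).re)
      (reCLM.comp (fderiv ℝ (fun x ↦ inner ℂ (w x) (h x)) z)) z :=
    reCLM.hasFDerivAt.comp z (hw.inner ℂ hh).hasFDerivAt
  rw [hre.fderiv, ← Complex.add_re, ← fderiv_inner_apply ℂ hw hh]
  rfl

theorem fderiv_re_inner_add_fderiv_re_inner_I_smul {w g : ℂ → V} {z : ℂ}
    (hw : DifferentiableAt ℝ w z) (hg : DifferentiableAt ℂ g z) :
    fderiv ℝ (fun x ↦ (inner ℂ (w x) (g x)).re) z 1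
        + fderiv ℝ (fun x ↦ (inner ℂ (w x) (I • g x)).re) z I
      = (inner ℂ (fderiv ℝ w z 1) (g z)).re + (inner ℂ (fderiv ℝ w z I) (I • g z)).re := by
  have hIg : DifferentiableAt ℂ (fun x ↦ I • g x) z := hg.const_smul I
  rw [fderiv_re_inner_apply hw (hg.restrictScalars ℝ),
    fderiv_re_inner_apply hw (hIg.restrictScalars ℝ), hg.fderiv_real_apply_eq_smul_deriv,
    hIg.fderiv_real_apply_eq_smul_deriv, deriv_fun_const_smul I hg]
  simp only [one_smul, smul_smul, I_mul_I, neg_one_smul, inner_neg_right, neg_re]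
  ring

end Complex

/-- Weak harmonicity of Hilbert-space-valued holomorphic maps: if `v : U → V` is
holomorphic on the open set `U ⊆ ℂ` and `w : ℂ → V` is `C¹` with compact support
contained in `U`, then `∫_U ( Re⟪∂ₛw, v'⟫ + Re⟪∂ₜw, i·v'⟫ ) dA = 0`, where
`∂ₛw(z)` and `∂ₜw(z)` are the real partial derivatives of `w` at `z` in the
directions `1` and `i`. -/
theorem weak_harmonicity_of_holomorphic
    {V : Type*} [NormedAddCommGroup V] [InnerProductSpace ℂ V] [CompleteSpace V]
    (U : Set ℂ) (hUopen : IsOpen U)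
    (v : ℂ → V) (hv : DifferentiableOn ℂ v U)
    (w : ℂ → V) (hw : ContDiff ℝ 1 w) (hwc : HasCompactSupport w)
    (hws : tsupport w ⊆ U) :
    ∫ z in U,
        ((inner ℂ (fderiv ℝ w z 1) (deriv v z) : ℂ).re
          + (inner ℂ (fderiv ℝ w z Complex.I) (Complex.I • deriv v z) : ℂ).re)
      = 0 := by
  have hv' : AnalyticOnNhd ℂ (deriv v) U := (hv.analyticOnNhd hUopen).deriv
  set f₁ : ℂ → ℝ := fun z ↦ (inner ℂ (w z) (deriv v z)).re
  set f₂ : ℂ → ℝ := fun z ↦ (inner ℂ (w z) (Complex.I • deriv v z)).re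
  have hf₁ : ContDiff ℝ 1 f₁ := Complex.reCLM.contDiff.comp <|
    contDiff_inner_of_tsupport_subset hw hws fun z hz ↦ (hv' z hz).contDiffAt.restrict_scalars ℝ
  have hf₂ : ContDiff ℝ 1 f₂ := Complex.reCLM.contDiff.comp <|
    contDiff_inner_of_tsupport_subset hw hws fun z hz ↦
      ((hv' z hz).contDiffAt.restrict_scalars ℝ).const_smul Complex.I
  have hf₁w : tsupport f₁ ⊆ tsupport w :=
    (tsupport_comp_subset Complex.zero_re _).trans tsupport_inner_subset_left
  have hf₂w : tsupport f₂ ⊆ tsupport w :=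
    (tsupport_comp_subset Complex.zero_re _).trans tsupport_inner_subset_left
  have hf₁c : HasCompactSupport f₁ := hwc.of_isClosed_subset (isClosed_tsupport _) hf₁w
  have hf₂c : HasCompactSupport f₂ := hwc.of_isClosed_subset (isClosed_tsupport _) hf₂w
  calc _ = ∫ z in U, fderiv ℝ f₁ z 1 + fderiv ℝ f₂ z Complex.I :=
        setIntegral_congr_fun hUopen.measurableSet fun z hz ↦
          (fderiv_re_inner_add_fderiv_re_inner_I_smul (hw.differentiable one_ne_zero z)
            (hv' z hz).differentiableAt).symm
    _ = 0 := by
      rw [integral_add (hf₁.integrable_fderiv_apply hf₁c 1).integrableOn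
          (hf₂.integrable_fderiv_apply hf₂c Complex.I).integrableOn,
        setIntegral_fderiv_apply_eq_zero hf₁ hf₁c (hf₁w.trans hws),
        setIntegral_fderiv_apply_eq_zero hf₂ hf₂c (hf₂w.trans hws), add_zero]
end
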